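/- If unif(N) = 𝔟 then unif(E) = min{unif(M), unif(N)}. -/

import Mathlib

open MeasureTheory Set Filter Cardinal

/-- `μ` is the uniform product ("fair coin") probability measure on Cantor space `2^ω`,
characterized by its values on cylinders. -/
def IsFairCoin (μ : Measure (ℕ → Bool)) : Prop :=
  ∀ (s : Finset ℕ) (σ : ℕ → Bool),
    μ {x : ℕ → Bool | ∀ i ∈ s, x i = σ i} = (1 / 2 : ENNReal) ^ s.card

/-- The σ-ideal of μ-null sets. -/
def nullIdeal (μ : Measure (ℕ → Bool)) : Set (Set (ℕ → Bool)) := {A | μ A = 0}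

/-- The σ-ideal of meager subsets of Cantor space. -/
def meagerIdeal : Set (Set (ℕ → Bool)) := {A | IsMeagre A}

/-- The σ-ideal generated by closed measure zero sets. -/
def closedNullIdeal (μ : Measure (ℕ → Bool)) : Set (Set (ℕ → Bool)) :=
  {A | ∃ F : ℕ → Set (ℕ → Bool), (∀ n, IsClosed (F n) ∧ μ (F n) = 0) ∧ A ⊆ ⋃ n, F n}

/-- `add(I, J)`: the least cardinality of a subfamily of `I` whose union is not in `J`. -/
noncomputable def addIJ (I J : Set (Set (ℕ → Bool))) : Cardinal :=
  sInf {c : Cardinal | ∃ A : Set (Set (ℕ → Bool)), A ⊆ I ∧ ⋃₀ A ∉ J ∧ c = #A}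

/-- `cov(J)`: the least cardinality of a subfamily of `J` covering the whole space. -/
noncomputable def covI (J : Set (Set (ℕ → Bool))) : Cardinal :=
  sInf {c : Cardinal | ∃ A : Set (Set (ℕ → Bool)), A ⊆ J ∧ ⋃₀ A = Set.univ ∧ c = #A}

/-- `unif(J)`: the least cardinality of a set of reals not in `J`. -/
noncomputable def unifI (J : Set (Set (ℕ → Bool))) : Cardinal :=
  sInf {c : Cardinal | ∃ X : Set (ℕ → Bool), X ∉ J ∧ c = #X}

/-- `cof(I, J)`: the least cardinality of a subfamily of `J` cofinal over `I`. -/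
noncomputable def cofIJ (I J : Set (Set (ℕ → Bool))) : Cardinal :=
  sInf {c : Cardinal | ∃ A : Set (Set (ℕ → Bool)), A ⊆ J ∧
    (∀ B ∈ I, ∃ C ∈ A, B ⊆ C) ∧ c = #A}

/-- The dominating number 𝔡. -/
noncomputable def frakD : Cardinal :=
  sInf {c : Cardinal | ∃ F : Set (ℕ → ℕ),
    (∀ g : ℕ → ℕ, ∃ f ∈ F, ∀ᶠ n in atTop, g n ≤ f n) ∧ c = #F}

/-- The unbounding number 𝔟. -/
noncomputable def frakB : Cardinal :=
  sInf {c : Cardinal | ∃ F : Set (ℕ → ℕ),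
    (∀ g : ℕ → ℕ, ∃ f ∈ F, ¬ ∀ᶠ n in atTop, f n ≤ g n) ∧ c = #F}

/-!
Since `E ⊆ N` and `E ⊆ M`, we have `unif(E) ≤ min(unif(M), unif(N)) ≤ unif(N) = 𝔟`, so it suffices
that every set `A` of size `< 𝔟` is in `E`. Such an `A` is null, hence contained in `⋂ₙ Uₙ` with
`Uₙ` open and `μ Uₙ → 0`. Write each `Uₙ` as an increasing union of closed sets `Fₙ₀ ⊆ Fₙ₁ ⊆ ⋯`;
each `x ∈ A` gives the function `n ↦ (some k with x ∈ Fₙₖ)`, and fewer than `𝔟` such functions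
are eventually dominated by a single `g`. Then `A` is covered by the closed null sets
`⋂_{n ≥ m} Fₙ_{g n}`.
-/

open scoped ENNReal

lemma exists_eventually_le_of_mk_lt_frakB {G : Set (ℕ → ℕ)} (hG : #G < frakB) :
    ∃ g : ℕ → ℕ, ∀ f ∈ G, ∀ᶠ n in atTop, f n ≤ g n := by
  by_contra! hunb
  refine (csInf_le' ⟨G, fun g => ?_, rfl⟩ : frakB ≤ #G).not_gt hG
  simpa only [not_eventually, not_le] using hunb g

lemma mem_of_mk_lt_unifI {J : Set (Set (ℕ → Bool))} {X : Set (ℕ → Bool)} (hX : #X < unifI J) :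
    X ∈ J := by
  by_contra hXJ
  exact (csInf_le' ⟨X, hXJ, rfl⟩ : unifI J ≤ #X).not_gt hX

lemma le_unifI {J : Set (Set (ℕ → Bool))} {c : Cardinal} (hJ : Set.univ ∉ J)
    (h : ∀ X : Set (ℕ → Bool), #X < c → X ∈ J) : c ≤ unifI J := by
  refine le_csInf ⟨_, Set.univ, hJ, rfl⟩ ?_
  rintro _ ⟨X, hXJ, rfl⟩
  exact not_lt.1 fun hX => hXJ (h X hX)

lemma unifI_mono {I J : Set (Set (ℕ → Bool))} (hIJ : I ⊆ J) (hJ : Set.univ ∉ J) :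
    unifI I ≤ unifI J :=
  le_unifI hJ fun _ hX => hIJ (mem_of_mk_lt_unifI hX)

lemma IsOpen.exists_monotone_iUnion_isClosed {X : Type*} [TopologicalSpace X]
    [PerfectlyNormalSpace X] {U : Set X} (hU : IsOpen U) :
    ∃ F : ℕ → Set X, (∀ n, IsClosed (F n)) ∧ Monotone F ∧ ⋃ n, F n = U := by
  obtain ⟨V, hVopen, hV⟩ := isGδ_iff_eq_iInter_nat.1 hU.isClosed_compl.isGδ
  refine ⟨accumulate fun n => (V n)ᶜ, fun n => ?_, monotone_accumulate, ?_⟩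
  · exact (finite_le_nat n).isClosed_biUnion fun k _ => (hVopen k).isClosed_compl
  · rw [iUnion_accumulate, ← compl_iInter, ← hV, compl_compl]

lemma exists_isClosed_cover_of_mk_lt_frakB {X : Type} [TopologicalSpace X]
    [PerfectlyNormalSpace X] {U : ℕ → Set X} (hU : ∀ n, IsOpen (U n)) {A : Set X}
    (hAU : ∀ n, A ⊆ U n) (hA : #A < frakB) :
    ∃ C : ℕ → Set X, (∀ m, IsClosed (C m) ∧ ∀ n ≥ m, C m ⊆ U n) ∧ A ⊆ ⋃ m, C m := by
  choose F hFclosed hFmono hFU using fun n => (hU n).exists_monotone_iUnion_isClosed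
  have hindex : ∀ (x : A) n, ∃ k, (x : X) ∈ F n k := fun x n => by
    simpa only [← hFU n, mem_iUnion] using hAU n x.2
  choose index hindex using hindex
  obtain ⟨g, hg⟩ := exists_eventually_le_of_mk_lt_frakB (mk_range_le.trans_lt hA)
  refine ⟨fun m => ⋂ n ≥ m, F n (g n), fun m => ⟨?_, fun n hn => ?_⟩, fun x hx => ?_⟩
  · exact isClosed_biInter fun n _ => hFclosed n (g n)
  · exact (biInter_subset_of_mem hn).trans (hFU n ▸ subset_iUnion (F n) (g n))
  · obtain ⟨m, hm⟩ := eventually_atTop.1 (hg _ (mem_range_self ⟨x, hx⟩))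
    exact mem_iUnion.2 ⟨m, mem_iInter₂.2 fun n hn => hFmono n (hm n hn) (hindex ⟨x, hx⟩ n)⟩

lemma exists_isClosed_null_cover_of_mk_lt_frakB {X : Type} [TopologicalSpace X]
    [PerfectlyNormalSpace X] [MeasurableSpace X] (μ : Measure X) [μ.OuterRegular] {A : Set X}
    (hA0 : μ A = 0) (hA : #A < frakB) :
    ∃ F : ℕ → Set X, (∀ n, IsClosed (F n) ∧ μ (F n) = 0) ∧ A ⊆ ⋃ n, F n := by
  have hU : ∀ n : ℕ, ∃ U ⊇ A, IsOpen U ∧ μ U < (n : ℝ≥0∞)⁻¹ := fun n =>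
    A.exists_isOpen_lt_of_lt _ (hA0 ▸ ENNReal.inv_pos.2 (ENNReal.natCast_ne_top n))
  choose U hAU hUopen hUμ using hU
  obtain ⟨C, hC, hAC⟩ := exists_isClosed_cover_of_mk_lt_frakB hUopen hAU hA
  refine ⟨C, fun m => ⟨(hC m).1, ?_⟩, hAC⟩
  refine nonpos_iff_eq_zero.1 (ge_of_tendsto ENNReal.tendsto_inv_nat_nhds_zero ?_)
  exact eventually_atTop.2 ⟨m, fun n hn => (measure_mono ((hC m).2 n hn)).trans (hUμ n).le⟩

lemma closedNullIdeal_subset_nullIdeal (μ : Measure (ℕ → Bool)) :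
    closedNullIdeal μ ⊆ nullIdeal μ := fun _ ⟨_, hF, hAF⟩ =>
  measure_mono_null hAF (measure_iUnion_null fun n => (hF n).2)

lemma closedNullIdeal_subset_meagerIdeal (μ : Measure (ℕ → Bool)) [μ.IsOpenPosMeasure] :
    closedNullIdeal μ ⊆ meagerIdeal := fun _ ⟨_, hF, hAF⟩ =>
  (isMeagre_iUnion fun n => ((hF n).1.isNowhereDense_iff.2
    (Measure.interior_eq_empty_of_null (hF n).2)).isMeagre).mono hAF

namespace IsFairCoin

variable {μ : Measure (ℕ → Bool)}

lemma isProbabilityMeasure (hμ : IsFairCoin μ) : IsProbabilityMeasure μ :=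
  ⟨by simpa using hμ ∅ fun _ => false⟩

lemma measure_cylinder (hμ : IsFairCoin μ) (x : ℕ → Bool) (n : ℕ) :
    μ (PiNat.cylinder x n) = (1 / 2 : ℝ≥0∞) ^ n := by
  simpa [PiNat.cylinder] using hμ (Finset.range n) x

lemma isOpenPosMeasure (hμ : IsFairCoin μ) : μ.IsOpenPosMeasure := by
  refine ⟨fun U hU ⟨x, hx⟩ hU0 => ?_⟩
  obtain ⟨_, ⟨y, n, rfl⟩, -, hyU⟩ :=
    (PiNat.isTopologicalBasis_cylinders fun _ => Bool).exists_subset_of_mem_open hx hU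
  have := measure_mono_null hyU hU0
  rw [hμ.measure_cylinder] at this
  exact pow_ne_zero n (by norm_num) this

end IsFairCoin

theorem unif_E_eq_min (μ : Measure (ℕ → Bool)) (hμ : IsFairCoin μ)
    (h : unifI (nullIdeal μ) = frakB) :
    unifI (closedNullIdeal μ) = min (unifI meagerIdeal) (unifI (nullIdeal μ)) := by
  have := hμ.isProbabilityMeasure
  have := hμ.isOpenPosMeasure
  have hN : Set.univ ∉ nullIdeal μ := by simp [nullIdeal]
  have hM : Set.univ ∉ meagerIdeal := not_isMeagre_of_isOpen isOpen_univ univ_nonempty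
  have hbE : frakB ≤ unifI (closedNullIdeal μ) :=
    le_unifI (fun hE => hN (closedNullIdeal_subset_nullIdeal μ hE)) fun A hA =>
      exists_isClosed_null_cover_of_mk_lt_frakB μ (mem_of_mk_lt_unifI (h ▸ hA)) hA
  refine le_antisymm (le_min ?_ ?_) ((min_le_right _ _).trans (h.trans_le hbE))
  · exact unifI_mono (closedNullIdeal_subset_meagerIdeal μ) hM
  · exact unifI_mono (closedNullIdeal_subset_nullIdeal μ) hN
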